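/- arXiv:2301.11271 — 4 statements merged into one kernel-verified Lean document; each statement's English description precedes it below -/
import Mathlib

section
/- Let D be the oriented incidence matrix (with rational entries) of a finite connected directed multigraph without loops, with vertex set V of cardinality n and edges indexed by Fin m. Then the image of the linear map ℚ^V → ℚ^m given by p ↦ Dᵀ·p (the space of tensions, i.e. vectors arising as potential differences along edges) is a ℚ-subspace of dimension n − 1. -/
/-- The space of tensions (image of the transposed incidence matrix) of a finite
connected directed multigraph without loops has dimension `n - 1`. -/
theorem tension_space_dim (V : Type) [Fintype V] [DecidableEq V] (n m : ℕ)
    (hn : Fintype.card V = n)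
    (t h : Fin m → V) (hloop : ∀ e, t e ≠ h e)
    (hconn : ∀ u v : V, Relation.EqvGen (fun a b => ∃ e, t e = a ∧ h e = b) u v)
    (D : Matrix V (Fin m) ℚ)
    (hD : ∀ v e, D v e = if v = h e then 1 else if v = t e then -1 else 0) :
    Module.finrank ℚ (LinearMap.range D.transpose.mulVecLin) = n - 1 := by
  classical
  have key : ∀ (p : V → ℚ) (e : Fin m),
      (D.transpose.mulVecLin p) e = p (h e) - p (t e) := by
    intro p e
    have : (D.transpose.mulVecLin p) e = ∑ v, D v e * p v := by
      simp only [Matrix.mulVecLin_apply, Matrix.mulVec, dotProduct,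
        Matrix.transpose_apply]
    rw [this]
    have hsum : ∀ v : V, D v e * p v =
        (if v = h e then p v else 0) + (if v = t e then -(p v) else 0) := by
      intro v
      rw [hD]
      by_cases h1 : v = h e
      · have h2 : v ≠ t e := by rw [h1]; exact fun hh => hloop e hh.symm
        have hne : h e ≠ t e := fun hh => hloop e hh.symm
        simp [h1, h2, hne]
      · by_cases h2 : v = t e <;> simp [h1, h2, hloop e]
    simp_rw [hsum]
    rw [Finset.sum_add_distrib, Finset.sum_ite_eq', Finset.sum_ite_eq']
    simp [sub_eq_add_neg]
  have hrn := LinearMap.finrank_range_add_finrank_ker D.transpose.mulVecLin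
  have hVfin : Module.finrank ℚ (V → ℚ) = n := by
    simp [hn]
  rcases isEmpty_or_nonempty V with hV | hV
  · have hn0 : n = 0 := by rw [← hn]; simp
    have : Module.finrank ℚ (LinearMap.range D.transpose.mulVecLin) ≤ n := by
      rw [← hVfin]
      exact (LinearMap.finrank_range_le _)
    omega
  · obtain ⟨v0⟩ := hV
    have hker : LinearMap.ker D.transpose.mulVecLin
        = Submodule.span ℚ {fun _ : V => (1 : ℚ)} := by
      ext p
      rw [LinearMap.mem_ker, Submodule.mem_span_singleton]
      constructor
      · intro hp
        have hedge : ∀ e, p (h e) = p (t e) := by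
          intro e
          have := key p e
          rw [hp] at this
          simp at this
          linarith [this]
        have hconst : ∀ u v : V, p u = p v := by
          intro u v
          induction hconn u v with
          | rel a b hab => obtain ⟨e, he1, he2⟩ := hab; rw [← he1, ← he2, hedge]
          | refl a => rfl
          | symm a b _ ih => exact ih.symm
          | trans a b c _ _ ih1 ih2 => exact ih1.trans ih2
        exact ⟨p v0, by funext v; simp [hconst v v0]⟩
      · rintro ⟨c, rfl⟩
        ext e
        rw [key]
        simp
    have hker1 : Module.finrank ℚ (LinearMap.ker D.transpose.mulVecLin) = 1 := by
      rw [hker]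
      exact finrank_span_singleton (by
        intro hcontr
        have := congrFun hcontr v0
        simp at this)
    have hn1 : 1 ≤ n := by
      rw [← hn]
      exact Fintype.card_pos_iff.mpr ⟨v0⟩
    rw [hVfin, hker1] at hrn
    omega
end

section
/- Let n ≥ 1, let Z be an n×n complex symmetric matrix whose entrywise imaginary part Im Z (a real symmetric n×n matrix) is positive definite, and let g ∈ Sp(2n, ℝ) be written in block form g = [[A, B], [C, D]] with n×n real blocks. Then the matrix CZ + D is invertible. -/
open Matrix

-- auxiliary: real part of complexified quadratic form
lemma aux_re {n : ℕ} (N : Matrix (Fin n) (Fin n) ℝ) (v : Fin n → ℂ) :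
    (star v ⬝ᵥ (N.map Complex.ofReal) *ᵥ v).re
      = (fun i => (v i).re) ⬝ᵥ N *ᵥ (fun i => (v i).re)
        + (fun i => (v i).im) ⬝ᵥ N *ᵥ (fun i => (v i).im) := by
  simp only [dotProduct, mulVec, map_apply, Pi.star_apply, Finset.mul_sum,
    Complex.re_sum]
  rw [← Finset.sum_add_distrib]
  refine Finset.sum_congr rfl fun i _ => ?_
  rw [← Finset.sum_add_distrib]
  refine Finset.sum_congr rfl fun j _ => ?_
  simp [Complex.mul_re, Complex.mul_im, Complex.star_def]

lemma aux_pos {n : ℕ} (N : Matrix (Fin n) (Fin n) ℝ) (hN : N.PosDef)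
    (v : Fin n → ℂ) (hv : v ≠ 0) :
    0 < (star v ⬝ᵥ (N.map Complex.ofReal) *ᵥ v).re := by
  rw [aux_re]
  set a : Fin n → ℝ := fun i => (v i).re
  set b : Fin n → ℝ := fun i => (v i).im
  have hab : a ≠ 0 ∨ b ≠ 0 := by
    by_contra h
    push_neg at h
    apply hv
    funext i
    have h1 := congrFun h.1 i
    have h2 := congrFun h.2 i
    exact Complex.ext h1 h2
  have hsa : 0 ≤ a ⬝ᵥ N *ᵥ a := by
    rcases eq_or_ne a 0 with h | h
    · simp [h]
    · simpa using (hN.dotProduct_mulVec_pos h).le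
  have hsb : 0 ≤ b ⬝ᵥ N *ᵥ b := by
    rcases eq_or_ne b 0 with h | h
    · simp [h]
    · simpa using (hN.dotProduct_mulVec_pos h).le
  rcases hab with h | h
  · have h2 : 0 < a ⬝ᵥ N *ᵥ a := by simpa using hN.dotProduct_mulVec_pos h
    linarith
  · have h2 : 0 < b ⬝ᵥ N *ᵥ b := by simpa using hN.dotProduct_mulVec_pos h
    linarith

/-- For `Z` in the Siegel upper half-space and `g = [[A,B],[C,D]] ∈ Sp(2n, ℝ)`,
the matrix `CZ + D` is invertible. -/
theorem siegel_CZ_add_D_invertible (n : ℕ) (hn : 1 ≤ n)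
    (Z : Matrix (Fin n) (Fin n) ℂ) (hZsymm : Z.IsSymm)
    (hZpos : (Z.map Complex.im).PosDef)
    (g : Matrix (Fin n ⊕ Fin n) (Fin n ⊕ Fin n) ℝ)
    (hg : gᵀ * Matrix.J (Fin n) ℝ * g = Matrix.J (Fin n) ℝ) :
    IsUnit ((g.toBlocks₂₁).map (Complex.ofReal) * Z
      + (g.toBlocks₂₂).map (Complex.ofReal)) := by
  rw [Matrix.isUnit_iff_isUnit_det, isUnit_iff_ne_zero]
  intro hdet
  obtain ⟨v, hv, hMv⟩ := Matrix.exists_mulVec_eq_zero_iff.mpr hdet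
  -- complexification of g
  set gc : Matrix (Fin n ⊕ Fin n) (Fin n ⊕ Fin n) ℂ :=
    g.map (Complex.ofRealHom : ℝ →+* ℂ) with hgc
  have hJmap : (Matrix.J (Fin n) ℝ).map (Complex.ofRealHom : ℝ →+* ℂ)
      = Matrix.J (Fin n) ℂ := by
    ext (i | i) (j | j) <;>
      simp [Matrix.J, Matrix.one_apply, apply_ite]
  have hgcJ : gcᵀ * Matrix.J (Fin n) ℂ * gc = Matrix.J (Fin n) ℂ := by
    have h := congrArg (fun M => M.map (Complex.ofRealHom : ℝ →+* ℂ)) hg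
    simpa [Matrix.map_mul, Matrix.transpose_map, hJmap, hgc] using h
  have hgcH : gcᴴ = gcᵀ := by
    ext i j
    simp [hgc, Matrix.conjTranspose_apply, Complex.conj_ofReal]
  set x : (Fin n ⊕ Fin n) → ℂ := Sum.elim (Z *ᵥ v) v with hx
  have hgcb : gc = Matrix.fromBlocks
      ((g.toBlocks₁₁).map Complex.ofReal) ((g.toBlocks₁₂).map Complex.ofReal)
      ((g.toBlocks₂₁).map Complex.ofReal) ((g.toBlocks₂₂).map Complex.ofReal) := by
    ext (i | i) (j | j) <;> rfl
  have hyy : gc *ᵥ x = Sum.elim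
      ((g.toBlocks₁₁).map Complex.ofReal *ᵥ (Z *ᵥ v)
        + (g.toBlocks₁₂).map Complex.ofReal *ᵥ v) 0 := by
    rw [hx, hgcb, Matrix.fromBlocks_mulVec]
    simp only [Sum.elim_comp_inl, Sum.elim_comp_inr, Matrix.mulVec_mulVec,
      ← Matrix.add_mulVec, hMv]
  have hstar_x : star x = Sum.elim (star (Z *ᵥ v)) (star v) := by
    funext i; cases i <;> rfl
  -- the invariant quantity is zero
  have hS0 : star x ⬝ᵥ (Matrix.J (Fin n) ℂ *ᵥ x) = 0 := by
    have h1 : star x ⬝ᵥ (Matrix.J (Fin n) ℂ *ᵥ x)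
        = star (gc *ᵥ x) ⬝ᵥ (Matrix.J (Fin n) ℂ *ᵥ (gc *ᵥ x)) := by
      rw [Matrix.star_mulVec, hgcH, Matrix.mulVec_mulVec,
        ← Matrix.dotProduct_mulVec, Matrix.mulVec_mulVec, ← Matrix.mul_assoc,
        hgcJ]
    rw [h1, hyy]
    set u : Fin n → ℂ := (g.toBlocks₁₁).map Complex.ofReal *ᵥ (Z *ᵥ v)
        + (g.toBlocks₁₂).map Complex.ofReal *ᵥ v with hu
    have hstar_u : star (Sum.elim u (0 : Fin n → ℂ))
        = Sum.elim (star u) 0 := by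
      funext i; cases i <;> simp
    rw [hstar_u, Matrix.J, Matrix.fromBlocks_mulVec]
    simp [sumElim_dotProduct_sumElim]
  -- compute the invariant quantity
  have hSval : star x ⬝ᵥ (Matrix.J (Fin n) ℂ *ᵥ x)
      = (2 * Complex.I) * (star v ⬝ᵥ ((Z.map Complex.im).map Complex.ofReal) *ᵥ v) := by
    have hJx : Matrix.J (Fin n) ℂ *ᵥ x = Sum.elim (-v) (Z *ᵥ v) := by
      rw [hx, Matrix.J, Matrix.fromBlocks_mulVec]
      simp [Matrix.neg_mulVec]
    rw [hJx, hstar_x, sumElim_dotProduct_sumElim, Matrix.star_mulVec,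
      dotProduct_neg, ← Matrix.dotProduct_mulVec]
    have hdiff : Z - Zᴴ = (2 * Complex.I) • ((Z.map Complex.im).map Complex.ofReal) := by
      ext i j
      have hZs : Z j i = Z i j := by
        conv_lhs => rw [← hZsymm]
        rfl
      simp only [Matrix.sub_apply, Matrix.conjTranspose_apply, Matrix.smul_apply,
        Matrix.map_apply, hZs, Complex.star_def, Complex.sub_conj, smul_eq_mul]
      push_cast
      ring
    rw [neg_add_eq_sub, ← dotProduct_sub, ← Matrix.sub_mulVec, hdiff,
      Matrix.smul_mulVec, dotProduct_smul, smul_eq_mul]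
  rw [hSval] at hS0
  have h2I : (2 * Complex.I) ≠ 0 := by simp [Complex.I_ne_zero]
  have hq0 : star v ⬝ᵥ ((Z.map Complex.im).map Complex.ofReal) *ᵥ v = 0 :=
    (mul_eq_zero.mp hS0).resolve_left h2I
  have hpos := aux_pos (Z.map Complex.im) hZpos v hv
  rw [hq0] at hpos
  simp at hpos
end

section
/- Let n ≥ 1, let Z be an n×n complex symmetric matrix whose entrywise imaginary part Im Z (a real symmetric n×n matrix) is positive definite, and let g ∈ Sp(2n, ℝ) be written in block form g = [[A, B], [C, D]] with n×n real blocks. Then the entrywise imaginary part of g·Z = (AZ + B)(CZ + D)⁻¹ is positive definite; hence Sp(2n, ℝ) acts on the Siegel upper half-space Sₙ by the transformations Z ↦ (AZ + B)(CZ + D)⁻¹, just as SL(2, ℝ) acts on the upper half-plane. -/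
open Matrix Complex

noncomputable section SiegelAux

variable {n : ℕ}

/-- ofReal-compatibility of dot products. -/
lemma siegel_dot_map (Y : Matrix (Fin n) (Fin n) ℝ) (x y : Fin n → ℝ) :
    (Complex.ofReal ∘ x) ⬝ᵥ (Y.map Complex.ofReal) *ᵥ (Complex.ofReal ∘ y)
      = ((x ⬝ᵥ Y *ᵥ y : ℝ) : ℂ) := by
  simp only [dotProduct, mulVec, Matrix.map_apply, Function.comp_apply]
  push_cast
  ring

/-- positivity of the complexified quadratic form of a real posdef matrix. -/
lemma siegel_posdef_complex {Y : Matrix (Fin n) (Fin n) ℝ} (hY : Y.PosDef)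
    (v : Fin n → ℂ) (hv : v ≠ 0) :
    ∃ p : ℝ, 0 < p ∧ star v ⬝ᵥ (Y.map Complex.ofReal) *ᵥ v = (p : ℂ) := by
  set a : Fin n → ℝ := fun i => (v i).re with ha
  set b : Fin n → ℝ := fun i => (v i).im with hb
  have hsymm : Yᵀ = Y := hY.1
  set Yc := Y.map Complex.ofReal with hYc
  have hYcT : Ycᵀ = Yc := by rw [hYc, ← transpose_map, hsymm]
  have hvdec : v = (Complex.ofReal ∘ a) + Complex.I • (Complex.ofReal ∘ b) := by
    funext i
    simp [ha, hb, Complex.ext_iff, mul_comm]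
  have hstar : star v = (Complex.ofReal ∘ a) - Complex.I • (Complex.ofReal ∘ b) := by
    funext i
    simp [ha, hb, Complex.ext_iff, mul_comm]
  have cross : (Complex.ofReal ∘ a) ⬝ᵥ Yc *ᵥ (Complex.ofReal ∘ b)
      = (Complex.ofReal ∘ b) ⬝ᵥ Yc *ᵥ (Complex.ofReal ∘ a) := by
    rw [Matrix.dotProduct_mulVec, ← hYcT, ← Matrix.mulVec_transpose, transpose_transpose,
      dotProduct_comm, hYcT]
  have expand : star v ⬝ᵥ Yc *ᵥ v
      = ((a ⬝ᵥ Y *ᵥ a + b ⬝ᵥ Y *ᵥ b : ℝ) : ℂ) := by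
    rw [hstar]; nth_rewrite 1 [hvdec]
    rw [Matrix.mulVec_add, Matrix.mulVec_smul, sub_dotProduct,
      dotProduct_add, dotProduct_add, smul_dotProduct,
      smul_dotProduct, dotProduct_smul, dotProduct_smul, cross,
      siegel_dot_map]
    simp only [smul_smul, Complex.I_mul_I, neg_smul, one_smul, sub_neg_eq_add, hYc,
      siegel_dot_map]
    push_cast
    ring
  refine ⟨a ⬝ᵥ Y *ᵥ a + b ⬝ᵥ Y *ᵥ b, ?_, expand⟩
  have hab : a ≠ 0 ∨ b ≠ 0 := by
    by_contra h
    push_neg at h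
    apply hv
    funext i
    have h1 : a i = 0 := congrFun h.1 i
    have h2 : b i = 0 := congrFun h.2 i
    simp [ha, hb] at h1 h2
    exact Complex.ext (by simpa using h1) (by simpa using h2)
  rcases hab with h | h
  · have := hY.dotProduct_mulVec_pos h
    have h2 := hY.posSemidef.dotProduct_mulVec_nonneg b
    simp only [star_trivial, RCLike.re_to_real] at this h2 ⊢
    linarith
  · have := hY.dotProduct_mulVec_pos h
    have h2 := hY.posSemidef.dotProduct_mulVec_nonneg a
    simp only [star_trivial, RCLike.re_to_real] at this h2 ⊢
    linarith

end SiegelAux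

/-- For `Z` in the Siegel upper half-space and `g = [[A,B],[C,D]] ∈ Sp(2n, ℝ)`,
the imaginary part of `g·Z = (AZ + B)(CZ + D)⁻¹` is positive definite, so
`Sp(2n, ℝ)` acts on the Siegel upper half-space. -/
theorem siegel_action_posDef (n : ℕ) (hn : 1 ≤ n)
    (Z : Matrix (Fin n) (Fin n) ℂ) (hZsymm : Z.IsSymm)
    (hZpos : (Z.map Complex.im).PosDef)
    (g : Matrix (Fin n ⊕ Fin n) (Fin n ⊕ Fin n) ℝ)
    (hg : gᵀ * Matrix.J (Fin n) ℝ * g = Matrix.J (Fin n) ℝ) :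
    ((((g.toBlocks₁₁).map (Complex.ofReal) * Z + (g.toBlocks₁₂).map (Complex.ofReal)) *
        ((g.toBlocks₂₁).map (Complex.ofReal) * Z
          + (g.toBlocks₂₂).map (Complex.ofReal))⁻¹).map Complex.im).PosDef := by
  have hZ : Zᵀ = Z := hZsymm
  set Ac := (g.toBlocks₁₁).map (Complex.ofReal) with hAc
  set Bc := (g.toBlocks₁₂).map (Complex.ofReal) with hBc
  set Cc := (g.toBlocks₂₁).map (Complex.ofReal) with hCc
  set Dc := (g.toBlocks₂₂).map (Complex.ofReal) with hDc
  -- block relations over ℂ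
  have hJmap : (Matrix.J (Fin n) ℝ).map (Complex.ofReal) = Matrix.J (Fin n) ℂ := by
    ext (i | i) (j | j) <;>
      simp [Matrix.J, Matrix.fromBlocks, Matrix.map_apply, Matrix.one_apply,
        apply_ite Complex.ofReal]
  have hgmap : g.map Complex.ofReal = Matrix.fromBlocks Ac Bc Cc Dc := by
    conv_lhs => rw [← Matrix.fromBlocks_toBlocks g]
    rw [Matrix.fromBlocks_map]
  have hgc : (Matrix.fromBlocks Ac Bc Cc Dc)ᵀ * Matrix.J (Fin n) ℂ *
      (Matrix.fromBlocks Ac Bc Cc Dc) = Matrix.J (Fin n) ℂ := by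
    have hcoe : (Complex.ofReal : ℝ → ℂ) = ⇑Complex.ofRealHom := rfl
    rw [← hgmap, ← hJmap, ← Matrix.transpose_map, hcoe, ← Matrix.map_mul, ← Matrix.map_mul, hg]
  rw [Matrix.J, Matrix.fromBlocks_transpose, Matrix.fromBlocks_multiply,
    Matrix.fromBlocks_multiply] at hgc
  simp only [Matrix.mul_zero, Matrix.mul_one, Matrix.mul_neg, zero_add, add_zero] at hgc
  rw [Matrix.fromBlocks_inj] at hgc
  obtain ⟨e11, e12, e21, e22⟩ := hgc
  have e11' : Ccᵀ * Ac - Acᵀ * Cc = 0 := by rw [sub_eq_add_neg, ← Matrix.neg_mul]; exact e11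
  have e12' : Ccᵀ * Bc - Acᵀ * Dc = -1 := by rw [sub_eq_add_neg, ← Matrix.neg_mul]; exact e12
  have e21' : Dcᵀ * Ac - Bcᵀ * Cc = 1 := by rw [sub_eq_add_neg, ← Matrix.neg_mul]; exact e21
  have e22' : Dcᵀ * Bc - Bcᵀ * Dc = 0 := by rw [sub_eq_add_neg, ← Matrix.neg_mul]; exact e22
  have f11 : Acᵀ * Cc - Ccᵀ * Ac = 0 := by rw [← neg_sub, e11', neg_zero]
  have f12 : Acᵀ * Dc - Ccᵀ * Bc = 1 := by rw [← neg_sub, e12', neg_neg]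
  have f21 : Bcᵀ * Cc - Dcᵀ * Ac = -1 := by rw [← neg_sub, e21']
  have f22 : Bcᵀ * Dc - Dcᵀ * Bc = 0 := by rw [← neg_sub, e22', neg_zero]
  -- the two key matrix identities
  set N := Ac * Z + Bc with hN
  set M := Cc * Z + Dc with hM
  set Zb := Z.map (starRingEnd ℂ) with hZb
  set Yc := (Z.map Complex.im).map Complex.ofReal with hYc
  have hZH : Zᴴ = Zb := by rw [Matrix.conjTranspose, hZ]; rfl
  have realH : ∀ P : Matrix (Fin n) (Fin n) ℝ,
      (P.map Complex.ofReal)ᴴ = Pᵀ.map Complex.ofReal := by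
    intro P
    ext i j
    simp [Matrix.conjTranspose_apply, Matrix.map_apply]
  have hAcH : Acᴴ = (g.toBlocks₁₁)ᵀ.map Complex.ofReal := realH _
  have hBcH : Bcᴴ = (g.toBlocks₁₂)ᵀ.map Complex.ofReal := realH _
  have hCcH : Ccᴴ = (g.toBlocks₂₁)ᵀ.map Complex.ofReal := realH _
  have hDcH : Dcᴴ = (g.toBlocks₂₂)ᵀ.map Complex.ofReal := realH _
  have hAcT : Acᵀ = (g.toBlocks₁₁)ᵀ.map Complex.ofReal := (Matrix.transpose_map).symm
  have hBcT : Bcᵀ = (g.toBlocks₁₂)ᵀ.map Complex.ofReal := (Matrix.transpose_map).symm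
  have hCcT : Ccᵀ = (g.toBlocks₂₁)ᵀ.map Complex.ofReal := (Matrix.transpose_map).symm
  have hDcT : Dcᵀ = (g.toBlocks₂₂)ᵀ.map Complex.ofReal := (Matrix.transpose_map).symm
  have hNM : Nᵀ * M = Mᵀ * N := by
    have expand : Nᵀ * M - Mᵀ * N
        = Z * (Acᵀ * Cc - Ccᵀ * Ac) * Z + Z * (Acᵀ * Dc - Ccᵀ * Bc)
          + (Bcᵀ * Cc - Dcᵀ * Ac) * Z + (Bcᵀ * Dc - Dcᵀ * Bc) := by
      simp only [hN, hM, Matrix.transpose_add, Matrix.transpose_mul, hZ]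
      noncomm_ring
    rw [f11, f12, f21, f22] at expand
    simp only [Matrix.mul_zero, Matrix.zero_mul, Matrix.mul_one, Matrix.neg_mul,
      Matrix.one_mul, zero_add, add_zero] at expand
    have : Nᵀ * M - Mᵀ * N = 0 := by rw [expand]; simp
    exact sub_eq_zero.mp this
  have hHerm : Mᴴ * N - Nᴴ * M = Z - Zb := by
    have expand : Mᴴ * N - Nᴴ * M
        = Zb * (Ccᵀ * Ac - Acᵀ * Cc) * Z + Zb * (Ccᵀ * Bc - Acᵀ * Dc)
          + (Dcᵀ * Ac - Bcᵀ * Cc) * Z + (Dcᵀ * Bc - Bcᵀ * Dc) := by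
      simp only [hN, hM, Matrix.conjTranspose_add, Matrix.conjTranspose_mul, hZH,
        hAcH, hBcH, hCcH, hDcH, ← hAcT, ← hBcT, ← hCcT, ← hDcT]
      noncomm_ring
    rw [e11', e12', e21', e22'] at expand
    simp only [Matrix.mul_zero, Matrix.zero_mul, Matrix.mul_one, Matrix.mul_neg,
      Matrix.one_mul, zero_add, add_zero] at expand
    rw [expand]
    noncomm_ring
  have hZZb : Z - Zb = (2 * Complex.I) • Yc := by
    ext i j
    simp only [Matrix.sub_apply, Matrix.smul_apply, hZb, hYc, Matrix.map_apply, smul_eq_mul]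
    rw [Complex.sub_conj]
    push_cast
    ring
  -- invertibility of M
  have hMdet : M.det ≠ 0 := by
    intro h0
    obtain ⟨v, hv, hMv⟩ := (Matrix.exists_mulVec_eq_zero_iff).mpr h0
    obtain ⟨p, hp, hpe⟩ := siegel_posdef_complex hZpos v hv
    have hzero : star v ⬝ᵥ ((Mᴴ * N - Nᴴ * M) *ᵥ v) = 0 := by
      rw [Matrix.sub_mulVec, dotProduct_sub, ← Matrix.mulVec_mulVec,
        ← Matrix.mulVec_mulVec]
      rw [Matrix.dotProduct_mulVec (star v) Mᴴ, ← Matrix.star_mulVec, hMv]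
      simp
    rw [hHerm, hZZb, Matrix.smul_mulVec, dotProduct_smul] at hzero
    rw [hYc, hpe] at hzero
    have h2I : (2 * Complex.I) ≠ 0 := by simp [Complex.ext_iff]
    have : (p : ℂ) ≠ 0 := by exact_mod_cast hp.ne'
    rw [smul_eq_mul] at hzero
    exact (mul_ne_zero h2I this) hzero
  have hMunit : IsUnit M.det := isUnit_iff_ne_zero.mpr hMdet
  have hMTunit : IsUnit Mᵀ.det := by rwa [Matrix.det_transpose]
  have hMHunit : IsUnit Mᴴ.det := by rw [Matrix.det_conjTranspose]; exact hMunit.star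
  set W := N * M⁻¹ with hW
  have hWT : Wᵀ = W := by
    have h1 : Mᵀ * W = Nᵀ := by
      rw [hW, ← Matrix.mul_assoc, ← hNM, Matrix.mul_assoc,
        Matrix.mul_nonsing_inv _ hMunit, Matrix.mul_one]
    rw [hW, Matrix.transpose_mul, Matrix.transpose_nonsing_inv, ← h1,
      ← Matrix.mul_assoc, Matrix.nonsing_inv_mul _ hMTunit, Matrix.one_mul]
  have hKey : Mᴴ * (W - Wᴴ) * M = Z - Zb := by
    have hWM : W * M = N := by
      rw [hW, Matrix.mul_assoc, Matrix.nonsing_inv_mul _ hMunit, Matrix.mul_one]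
    have hWH : Mᴴ * Wᴴ = Nᴴ := by
      rw [hW, Matrix.conjTranspose_mul, Matrix.conjTranspose_nonsing_inv,
        ← Matrix.mul_assoc, Matrix.mul_nonsing_inv _ hMHunit, Matrix.one_mul]
    calc Mᴴ * (W - Wᴴ) * M = Mᴴ * (W * M) - (Mᴴ * Wᴴ) * M := by noncomm_ring
    _ = Mᴴ * N - Nᴴ * M := by rw [hWM, hWH]
    _ = Z - Zb := hHerm
  -- conclude
  have hWb : W - Wᴴ = (2 * Complex.I) • ((W.map Complex.im).map Complex.ofReal) := by
    have : Wᴴ = W.map (starRingEnd ℂ) := by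
      rw [Matrix.conjTranspose, hWT]; rfl
    rw [this]
    ext i j
    simp only [Matrix.sub_apply, Matrix.smul_apply, Matrix.map_apply, smul_eq_mul]
    rw [Complex.sub_conj]
    push_cast
    ring
  rw [Matrix.posDef_iff_dotProduct_mulVec]
  constructor
  · -- hermitian
    show _ = _
    ext i j
    simp only [Matrix.conjTranspose_apply, Matrix.map_apply, star_trivial]
    rw [show W j i = Wᵀ i j from rfl, hWT]
  · intro x hx
    set xc : Fin n → ℂ := Complex.ofReal ∘ x with hxc
    have hxcne : xc ≠ 0 := by
      intro h
      apply hx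
      funext i
      have := congrFun h i
      simpa [hxc] using this
    set v := M⁻¹ *ᵥ xc with hv
    have hMv : M *ᵥ v = xc := by
      rw [hv, Matrix.mulVec_mulVec, Matrix.mul_nonsing_inv _ hMunit, Matrix.one_mulVec]
    have hvne : v ≠ 0 := by
      intro h
      apply hxcne
      rw [← hMv, h, Matrix.mulVec_zero]
    obtain ⟨p, hp, hpe⟩ := siegel_posdef_complex hZpos v hvne
    have hstarxc : star xc = xc := by
      funext i
      simp [hxc]
    have hchain : xc ⬝ᵥ ((W - Wᴴ) *ᵥ xc) = (2 * Complex.I) * p := by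
      have e1 : star v ⬝ᵥ (Mᴴ *ᵥ ((W - Wᴴ) *ᵥ (M *ᵥ v))) = xc ⬝ᵥ ((W - Wᴴ) *ᵥ xc) := by
        conv_lhs => rw [Matrix.dotProduct_mulVec, ← Matrix.star_mulVec, hMv, hstarxc]
      rw [← e1, Matrix.mulVec_mulVec, Matrix.mulVec_mulVec, hKey, hZZb,
        Matrix.smul_mulVec, dotProduct_smul, smul_eq_mul, hYc, hpe]
    have hchain2 : xc ⬝ᵥ ((W - Wᴴ) *ᵥ xc)
        = (2 * Complex.I) * ((x ⬝ᵥ (W.map Complex.im) *ᵥ x : ℝ) : ℂ) := by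
      rw [hWb, Matrix.smul_mulVec, dotProduct_smul, smul_eq_mul, hxc,
        siegel_dot_map]
    have h2I : (2 * Complex.I) ≠ 0 := by simp [Complex.ext_iff]
    have heq : ((x ⬝ᵥ (W.map Complex.im) *ᵥ x : ℝ) : ℂ) = (p : ℂ) :=
      mul_left_cancel₀ h2I (hchain2.symm.trans hchain)
    have : x ⬝ᵥ (W.map Complex.im) *ᵥ x = p := by exact_mod_cast heq
    simpa [this] using hp
end

section
/- Let n ≥ 1 and let Z be an n×n complex symmetric matrix such that the hermitian matrix 1 − Zᴴ·Z is positive definite (where Zᴴ is the conjugate transpose; since Z is symmetric, Zᴴ equals the entrywise conjugate of Z). Then 1 − Z is invertible, and the Cayley transform W = i·(1 + Z)·(1 − Z)⁻¹ is a symmetric matrix whose entrywise imaginary part is positive definite, i.e. W lies in the Siegel upper half-space Sₙ. -/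
open Matrix ComplexOrder

/-- The Cayley transform `W = i(1 + Z)(1 - Z)⁻¹` maps `Cₙ` (symmetric `Z` with
`1 - Zᴴ Z` positive definite) into the Siegel upper half-space. -/
theorem cayley_transform_mem_siegel (n : ℕ) (hn : 1 ≤ n)
    (Z : Matrix (Fin n) (Fin n) ℂ) (hZsymm : Z.IsSymm)
    (hZ : (1 - Zᴴ * Z).PosDef) :
    IsUnit (1 - Z) ∧
      (Complex.I • ((1 + Z) * (1 - Z)⁻¹)).IsSymm ∧
      ((Complex.I • ((1 + Z) * (1 - Z)⁻¹)).map Complex.im).PosDef := by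
  set A : Matrix (Fin n) (Fin n) ℂ := 1 - Z with hA
  set B : Matrix (Fin n) (Fin n) ℂ := 1 + Z with hB
  -- Step 1: invertibility of A = 1 - Z
  have hAunit : IsUnit A := by
    rw [Matrix.isUnit_iff_isUnit_det, isUnit_iff_ne_zero]
    intro hdet
    obtain ⟨v, hv, hAv⟩ := (Matrix.exists_mulVec_eq_zero_iff).2 hdet
    have hZv : Z *ᵥ v = v := by
      have : (1 : Matrix (Fin n) (Fin n) ℂ) *ᵥ v - Z *ᵥ v = 0 := by
        rw [← Matrix.sub_mulVec]; exact hAv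
      simpa [sub_eq_zero, eq_comm] using this
    have hpos := hZ.dotProduct_mulVec_pos hv
    have : star v ⬝ᵥ (1 - Zᴴ * Z) *ᵥ v = 0 := by
      have h1 : star v ⬝ᵥ (Zᴴ * Z) *ᵥ v = star v ⬝ᵥ v := by
        rw [← Matrix.mulVec_mulVec, hZv, Matrix.dotProduct_mulVec, ← Matrix.star_mulVec, hZv]
      rw [Matrix.sub_mulVec, dotProduct_sub, h1]
      simp
    rw [this] at hpos
    exact lt_irrefl _ hpos
  have hdet : IsUnit A.det := (Matrix.isUnit_iff_isUnit_det A).mp hAunit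
  have hAinv : A * A⁻¹ = 1 := Matrix.mul_nonsing_inv _ hdet
  have hinvA : A⁻¹ * A = 1 := Matrix.nonsing_inv_mul _ hdet
  -- A and B commute
  have hcomm : B * A = A * B := by rw [hA, hB]; noncomm_ring
  have hcomm' : B * A⁻¹ = A⁻¹ * B := by
    calc B * A⁻¹ = A⁻¹ * A * B * A⁻¹ := by rw [hinvA, one_mul]
    _ = A⁻¹ * (A * B) * A⁻¹ := by rw [mul_assoc A⁻¹ A B]
    _ = A⁻¹ * (B * A) * A⁻¹ := by rw [hcomm]
    _ = A⁻¹ * B * (A * A⁻¹) := by simp only [mul_assoc]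
    _ = A⁻¹ * B := by rw [hAinv, mul_one]
  -- Step 2: symmetry
  have hAT : Aᵀ = A := by rw [hA]; simp [transpose_sub, hZsymm.eq]
  have hBT : Bᵀ = B := by rw [hB]; simp [transpose_add, hZsymm.eq]
  have hWsymm : (Complex.I • (B * A⁻¹)).IsSymm := by
    rw [Matrix.IsSymm, transpose_smul, transpose_mul, Matrix.transpose_nonsing_inv, hAT, hBT,
      ← hcomm']
  refine ⟨hAunit, hWsymm, ?_⟩
  -- Step 3: positive definiteness of the imaginary part
  set W : Matrix (Fin n) (Fin n) ℂ := Complex.I • (B * A⁻¹) with hW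
  set K : Matrix (Fin n) (Fin n) ℂ := (A⁻¹)ᴴ * (1 - Zᴴ * Z) * A⁻¹ with hK
  have hKpos : K.PosDef := by
    refine Matrix.PosDef.of_dotProduct_mulVec_pos (Matrix.isHermitian_conjTranspose_mul_mul _ hZ.1) fun x hx => ?_
    have hx' : A⁻¹ *ᵥ x ≠ 0 := by
      intro h
      apply hx
      have : A *ᵥ (A⁻¹ *ᵥ x) = x := by rw [Matrix.mulVec_mulVec, hAinv, Matrix.one_mulVec]
      rw [h, Matrix.mulVec_zero] at this
      exact this.symm
    have := hZ.dotProduct_mulVec_pos hx'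
    simpa only [hK, Matrix.star_mulVec, Matrix.dotProduct_mulVec, Matrix.vecMul_vecMul] using this
  -- key identity: W - Wᴴ = (2 * I) • K
  have hAHinv : (Aᴴ)⁻¹ * Aᴴ = 1 := by
    rw [← Matrix.conjTranspose_nonsing_inv, ← conjTranspose_mul, hAinv, conjTranspose_one]
  have hAH : Aᴴ * B + Bᴴ * A = (2 : ℂ) • (1 - Zᴴ * Z) := by
    rw [hA, hB, conjTranspose_sub, conjTranspose_add, conjTranspose_one, two_smul]
    noncomm_ring
  have hkey : W - Wᴴ = ((2 : ℂ) * Complex.I) • K := by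
    have hWH : Wᴴ = (-Complex.I) • ((Aᴴ)⁻¹ * Bᴴ) := by
      rw [hW, conjTranspose_smul, conjTranspose_mul, Matrix.conjTranspose_nonsing_inv]
      simp [Complex.star_def, Complex.conj_I]
    have h1 : W = Complex.I • ((Aᴴ)⁻¹ * (Aᴴ * B) * A⁻¹) := by
      rw [← mul_assoc, hAHinv, one_mul, hW]
    have h2 : Wᴴ = (-Complex.I) • ((Aᴴ)⁻¹ * (Bᴴ * A) * A⁻¹) := by
      rw [hWH]
      congr 1
      simp only [mul_assoc, hAinv, mul_one]
    clear_value A B W K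
    rw [h2, h1, neg_smul, sub_neg_eq_add, ← smul_add, hK, Matrix.conjTranspose_nonsing_inv]
    have hdist : (Aᴴ)⁻¹ * (Aᴴ * B) * A⁻¹ + (Aᴴ)⁻¹ * (Bᴴ * A) * A⁻¹
        = (Aᴴ)⁻¹ * (Aᴴ * B + Bᴴ * A) * A⁻¹ := by
      rw [Matrix.mul_add, Matrix.add_mul]
    rw [hdist, hAH, Matrix.mul_smul, Matrix.smul_mul, smul_smul, mul_comm]
  -- now prove the PosDef of the imaginary-part matrix
  refine Matrix.PosDef.of_dotProduct_mulVec_pos ?_ ?_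
  · -- IsHermitian of the real matrix
    have hWT : Wᵀ = W := hWsymm
    ext i j
    simp only [conjTranspose_apply, map_apply, star_trivial]
    rw [show W j i = Wᵀ i j from rfl, hWT]
  · intro x hx
    set v : Fin n → ℂ := fun i => (x i : ℂ) with hv
    have hvne : v ≠ 0 := by
      intro h
      apply hx
      funext i
      have := congrFun h i
      simpa [hv] using congrArg Complex.re this
    have hstar : star v = v := by
      funext i
      simp [hv, Complex.star_def, Complex.conj_ofReal]
    -- claim 1 : the real quadratic form equals the imaginary part of the complex one
    have claim1 : x ⬝ᵥ (W.map Complex.im) *ᵥ x = (star v ⬝ᵥ W *ᵥ v).im := by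
      rw [hstar]
      simp only [dotProduct, mulVec, map_apply, Complex.im_sum, Finset.mul_sum]
      apply Finset.sum_congr rfl
      intro i _
      apply Finset.sum_congr rfl
      intro j _
      simp [hv, Complex.mul_im, Complex.mul_re]
    -- claim 2 : conj of the quadratic form
    have claim2 : (starRingEnd ℂ) (star v ⬝ᵥ W *ᵥ v) = star v ⬝ᵥ Wᴴ *ᵥ v := by
      rw [← Complex.star_def, Matrix.star_dotProduct, Matrix.star_mulVec, star_star,
        Matrix.dotProduct_mulVec, hstar]
    set c : ℂ := star v ⬝ᵥ W *ᵥ v with hc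
    set q : ℂ := star v ⬝ᵥ K *ᵥ v with hq
    have hqpos : 0 < q := hKpos.dotProduct_mulVec_pos hvne
    have hqre : 0 < q.re ∧ 0 = q.im := by
      rw [Complex.lt_def] at hqpos
      simpa using hqpos
    have hsub : c - (starRingEnd ℂ) c = ((2 : ℂ) * Complex.I) * q := by
      rw [claim2, hc, hq, ← dotProduct_sub, ← Matrix.sub_mulVec, hkey,
        Matrix.smul_mulVec, dotProduct_smul, smul_eq_mul]
    have him : c.im = q.re := by
      have h := congrArg Complex.im hsub
      simp only [Complex.sub_im, Complex.conj_im, Complex.mul_im, Complex.mul_re,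
        Complex.I_re, Complex.I_im, ← hqre.2] at h
      norm_num at h
      linarith
    rw [show star x = x from star_trivial x, claim1, him]
    exact hqre.1
end
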